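/- With m = 2 resources, the mechanism F2 satisfies SI, EF, and PO. -/

import Mathlib

open Finset
open scoped Classical

/-- A valid instance: all demands lie in `(0,1]` and every agent has a resource
with normalized demand `1` (its dominant resource). -/
def ValidInstance {n m : ℕ} (d : Fin n → Fin m → ℝ) : Prop :=
  (∀ i r, 0 < d i r ∧ d i r ≤ 1) ∧ ∀ i, ∃ r, d i r = 1

/-- Entrywise nonnegative allocation. -/
def NonnegAlloc {n m : ℕ} (A : Fin n → Fin m → ℝ) : Prop := ∀ i r, 0 ≤ A i r

/-- A feasible allocation: nonnegative and no resource over-allocated. -/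
def Feasible {n m : ℕ} (A : Fin n → Fin m → ℝ) : Prop :=
  NonnegAlloc A ∧ ∀ r, ∑ i, A i r ≤ 1

/-- Leontief utility of a bundle `Av` for demand vector `dv`:
the largest `y ≥ 0` with `y * dv r ≤ Av r` for all `r`. -/
noncomputable def util {m : ℕ} (dv Av : Fin m → ℝ) : ℝ :=
  sSup {y : ℝ | 0 ≤ y ∧ ∀ r, y * dv r ≤ Av r}

/-- Share incentive: every agent gets utility at least `1/n`. -/
def SI {n m : ℕ} (d A : Fin n → Fin m → ℝ) : Prop :=
  ∀ i, (1 : ℝ) / n ≤ util (d i) (A i)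

/-- Envy-freeness: no agent prefers another agent's bundle. -/
def EF {n m : ℕ} (d A : Fin n → Fin m → ℝ) : Prop :=
  ∀ i j, util (d i) (A j) ≤ util (d i) (A i)

/-- Social welfare: the sum of all utilities. -/
noncomputable def SW {n m : ℕ} (d A : Fin n → Fin m → ℝ) : ℝ :=
  ∑ i, util (d i) (A i)

/-- Utilization: the minimum over resources of the total allocated amount. -/
noncomputable def Util {n m : ℕ} (A : Fin n → Fin m → ℝ) : ℝ :=
  ⨅ r : Fin m, ∑ i, A i r

/-- Pareto optimality of an allocation. -/
def PO {n m : ℕ} (d A : Fin n → Fin m → ℝ) : Prop :=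
  ¬ ∃ A' : Fin n → Fin m → ℝ, Feasible A' ∧
      (∀ i, util (d i) (A i) ≤ util (d i) (A' i)) ∧
      ∃ i, util (d i) (A i) < util (d i) (A' i)

/-- Agents whose dominant resource is resource 1 (index `0`). -/
noncomputable def G1 {n m : ℕ} [NeZero m] (d : Fin n → Fin m → ℝ) : Finset (Fin n) :=
  Finset.univ.filter (fun i => d i 0 = 1)

/-- Agents whose demand for resource 1 (index `0`) is below `1`. -/
noncomputable def G2 {n m : ℕ} [NeZero m] (d : Fin n → Fin m → ℝ) : Finset (Fin n) :=
  Finset.univ.filter (fun i => d i 0 < 1)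

/-- Minority ratio `α = |G2| / n` for two resources. -/
def MinorityRatio {n : ℕ} (d : Fin n → Fin 2 → ℝ) (α : ℚ) : Prop :=
  ((G2 d).card : ℚ) = α * n

/-- The DRF allocation: every agent gets `x* • d i` with
`x* = 1 / max_r Σ_j d j r`. -/
noncomputable def DRF {n m : ℕ} (d : Fin n → Fin m → ℝ) : Fin n → Fin m → ℝ :=
  fun i r => (1 / ⨆ r' : Fin m, ∑ j, d j r') * d i r

/-- The F1 allocation at water level `t`: agents in `G1` get dominant share `1/n`;
an agent `i` with `d i 0 < 1` gets `max (d i 0 / n) t` of resource 1, i.e. has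
scale factor `max (1/n) (t / d i 0)`. -/
noncomputable def F1At {n m : ℕ} [NeZero m] (d : Fin n → Fin m → ℝ) (t : ℝ) :
    Fin n → Fin m → ℝ :=
  fun i r => (if d i 0 = 1 then (1 : ℝ) / n else max ((1 : ℝ) / n) (t / d i 0)) * d i r

/-- The F1 allocation: F1 at the largest feasible water level. -/
noncomputable def F1 {n m : ℕ} [NeZero m] (d : Fin n → Fin m → ℝ) : Fin n → Fin m → ℝ :=
  F1At d (sSup {t : ℝ | 0 ≤ t ∧ Feasible (F1At d t)})

/-- Residual amount of resource 1 after every agent receives `(1/n) • d i`. -/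
noncomputable def R1 {n : ℕ} (d : Fin n → Fin 2 → ℝ) : ℝ :=
  1 - ((G1 d).card : ℝ) / n - (∑ i ∈ G2 d, d i 0) / n

/-- Residual amount of resource 2 after every agent receives `(1/n) • d i`. -/
noncomputable def R2 {n : ℕ} (d : Fin n → Fin 2 → ℝ) : ℝ :=
  1 - ((G2 d).card : ℝ) / n - (∑ i ∈ G1 d, d i 1) / n

/-- Total increase over the equal split of the resource-1 shares of `G1`. -/
noncomputable def dS1 {n : ℕ} (d A : Fin n → Fin 2 → ℝ) : ℝ :=
  (∑ i ∈ G1 d, A i 0) - ((G1 d).card : ℝ) / n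

/-- Total increase over the equal split of the resource-2 shares of `G2`. -/
noncomputable def dS2 {n : ℕ} (d A : Fin n → Fin 2 → ℝ) : ℝ :=
  (∑ i ∈ G2 d, A i 1) - ((G2 d).card : ℝ) / n

/-- Water-filling structure of the F2-type allocations: within `G1` the
resource-2 shares are `max (d i 1 / n) t1`, within `G2` the resource-1 shares
are `max (d i 0 / n) t2`, and bundles are proportional to demands. -/
def Waterfill {n : ℕ} (d A : Fin n → Fin 2 → ℝ) (t1 t2 : ℝ) : Prop :=
  ∀ i, (d i 0 = 1 → A i 1 = max (d i 1 / n) t1 ∧ A i 0 = A i 1 / d i 1) ∧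
       (d i 0 < 1 → A i 0 = max (d i 0 / n) t2 ∧ A i 1 = A i 0 / d i 0)

/-- The output of an F2-type mechanism whose coupled rates follow the ratio
`ρ1 / ρ2`: a feasible water-filling allocation with
`dS1 / dS2 = ρ1 / ρ2` in which some resource is fully allocated. -/
def IsF2AllocWith {n : ℕ} (d A : Fin n → Fin 2 → ℝ) (ρ1 ρ2 : ℝ) : Prop :=
  ∃ t1 t2 : ℝ, 0 ≤ t1 ∧ 0 ≤ t2 ∧ Waterfill d A t1 t2 ∧
    dS1 d A * ρ2 = dS2 d A * ρ1 ∧ Feasible A ∧ ∃ r, ∑ i, A i r = 1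

/-- The output of mechanism F2 (rates coupled by `R1 / R2`). -/
def IsF2Alloc {n : ℕ} (d A : Fin n → Fin 2 → ℝ) : Prop :=
  IsF2AllocWith d A (R1 d) (R2 d)

/-- `R*_1 = R_1 + d_{i*,1}/n` where `i*` minimizes `d i 0` over `G2`. -/
noncomputable def R1s {n : ℕ} (d : Fin n → Fin 2 → ℝ) : ℝ :=
  R1 d + sInf ((fun i => d i 0) '' {i : Fin n | d i 0 < 1}) / n

/-- `R*_2 = R_2 + d_{j*,2}/n` where `j*` minimizes `d j 1` over `G1`. -/
noncomputable def R2s {n : ℕ} (d : Fin n → Fin 2 → ℝ) : ℝ :=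
  R2 d + sInf ((fun i => d i 1) '' {i : Fin n | d i 0 = 1}) / n

/-- The output of mechanism F2* (rates coupled by `R*_1 / R*_2`). -/
def IsF2sAlloc {n : ℕ} (d A : Fin n → Fin 2 → ℝ) : Prop :=
  IsF2AllocWith d A (R1s d) (R2s d)

/-!
Every F2 bundle is proportional to the agent's demand, and the agent's dominant share is at
least `1/n`, which is SI. Feasibility keeps both water levels at most `1/n`, so an agent of the
other group never gets more than `1/n` of one's dominant resource. Within a group, the agent
with the larger non-dominant demand has the larger share of its non-dominant resource but the
smaller dominant share. Hence for every two agents `i, j` there is a resource of which `j` gets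
no more than `i`, and with Leontief utilities that is EF. Finally, a non-wasteful allocation
that exhausts some resource is PO: raising one utility without lowering the others would need
more of that resource.
-/

section Leontief

variable {m : ℕ} {dv Av : Fin m → ℝ} {y : ℝ} {r : Fin m}

lemma util_le_of_le_mul (hd : 0 < dv r) (hA : 0 ≤ Av r) (hle : Av r ≤ y * dv r) :
    util dv Av ≤ y :=
  Real.sSup_le (fun _ hx => le_of_mul_le_mul_right ((hx.2 r).trans hle) hd)
    (nonneg_of_mul_nonneg_left (hA.trans hle) hd)

lemma le_util (hd : 0 < dv r) (hy : 0 ≤ y) (hle : ∀ r, y * dv r ≤ Av r) : y ≤ util dv Av :=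
  le_csSup ⟨Av r / dv r, fun _ hx => (le_div_iff₀ hd).2 (hx.2 r)⟩ ⟨hy, hle⟩

lemma util_mul_le (hd : 0 < dv r) (hA : 0 ≤ Av r) : util dv Av * dv r ≤ Av r :=
  (le_div_iff₀ hd).1 (util_le_of_le_mul hd hA (div_mul_cancel₀ _ hd.ne').ge)

lemma util_smul_self (hd : 0 < dv r) (hy : 0 ≤ y) : util dv (y • dv) = y :=
  le_antisymm (util_le_of_le_mul hd (mul_nonneg hy hd.le) le_rfl) (le_util hd hy fun _ => le_rfl)

variable {n : ℕ} {d A : Fin n → Fin m → ℝ} {w : Fin n → ℝ}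

lemma ef_of_forall_exists_le (hd : ∀ i r, 0 < d i r) (hw : ∀ i, 0 ≤ w i)
    (hA : ∀ i, A i = w i • d i) (hle : ∀ i j, ∃ r, A j r ≤ A i r) : EF d A := by
  intro i j
  obtain ⟨r, hr⟩ := hle i j
  rw [hA i, util_smul_self (hd i r) (hw i)]
  refine util_le_of_le_mul (hd i r) ?_ (by simpa [hA i] using hr)
  simpa [hA j] using mul_nonneg (hw j) (hd j r).le

lemma po_of_sum_eq_one (hd : ∀ i r, 0 < d i r) (hw : ∀ i, 0 ≤ w i)
    (hA : ∀ i, A i = w i • d i) (hr : ∑ i, A i r = 1) : PO d A := by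
  rintro ⟨A', ⟨hA'0, hA'1⟩, hge, i₀, hlt⟩
  have hutil : ∀ i, util (d i) (A i) = w i := fun i => by rw [hA i, util_smul_self (hd i r) (hw i)]
  have hAr : ∀ i, A i r = util (d i) (A i) * d i r := fun i => by rw [hutil i, hA i]; rfl
  have hlt_sum : ∑ i, A i r < ∑ i, util (d i) (A' i) * d i r := by
    refine Finset.sum_lt_sum (fun i _ => ?_) ⟨i₀, Finset.mem_univ _, ?_⟩
    · rw [hAr i]; exact mul_le_mul_of_nonneg_right (hge i) (hd i r).le
    · rw [hAr i₀]; exact mul_lt_mul_of_pos_right hlt (hd i₀ r)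
  have hle_sum : ∑ i, util (d i) (A' i) * d i r ≤ ∑ i, A' i r :=
    Finset.sum_le_sum fun i _ => util_mul_le (hd i r) (hA'0 i r)
  linarith [hA'1 r]

end Leontief

lemma le_one_div_of_sum_le_one {n : ℕ} {x : Fin n → ℝ} (hx : ∀ i, 1 / n ≤ x i)
    (hsum : ∑ i, x i ≤ 1) (j : Fin n) : x j ≤ 1 / n := by
  by_contra! hj
  have hlt : ∑ _i : Fin n, (1 : ℝ) / n < ∑ i, x i :=
    Finset.sum_lt_sum (fun i _ => hx i) ⟨j, Finset.mem_univ _, hj⟩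
  have hn : (n : ℝ) ≠ 0 := Nat.cast_ne_zero.2 (Fin.pos j).ne'
  simp only [Finset.sum_const, Finset.card_univ, Fintype.card_fin, nsmul_eq_mul,
    mul_one_div_cancel hn] at hlt
  linarith

lemma ValidInstance.eq_one_or {n : ℕ} {d : Fin n → Fin 2 → ℝ} (hd : ValidInstance d) (i : Fin n) :
    d i 0 = 1 ∨ d i 0 < 1 ∧ d i 1 = 1 := by
  rcases (hd.1 i 0).2.eq_or_lt with h | h
  · exact Or.inl h
  · obtain ⟨r, hr⟩ := hd.2 i
    fin_cases r
    · exact absurd hr h.ne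
    · exact Or.inr ⟨h, hr⟩

/-- The bundle `Av` of an agent with demand `dv`, dominant resource `r`, under water level `t`
on its other resource `s`. -/
structure IsWaterfillBundle (n : ℕ) (dv Av : Fin 2 → ℝ) (r s : Fin 2) (t : ℝ) : Prop where
  demand_dom : dv r = 1
  demand_pos : 0 < dv s
  demand_le_one : dv s ≤ 1
  share_other : Av s = max (dv s / n) t
  share_dom : Av r = Av s / dv s

namespace IsWaterfillBundle

variable {n : ℕ} {dv Av dv' Av' : Fin 2 → ℝ} {r s : Fin 2} {t : ℝ}

lemma share_dom_eq (hb : IsWaterfillBundle n dv Av r s t) :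
    Av r = max (1 / n : ℝ) (t / dv s) := by
  rw [hb.share_dom, hb.share_other, ← max_div_div_right hb.demand_pos.le,
    div_div_cancel_left' hb.demand_pos.ne', one_div]

lemma one_div_le (hb : IsWaterfillBundle n dv Av r s t) : 1 / n ≤ Av r :=
  hb.share_dom_eq ▸ le_max_left _ _

lemma level_le (hb : IsWaterfillBundle n dv Av r s t) : t ≤ Av s :=
  hb.share_other ▸ le_max_right _ _

lemma eq_smul (hb : IsWaterfillBundle n dv Av r s t) (hrs : r ≠ s) : Av = Av r • dv := by
  funext k
  obtain rfl | rfl : k = r ∨ k = s := by omega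
  · simp [hb.demand_dom]
  · simp [hb.share_dom, div_mul_cancel₀ _ hb.demand_pos.ne']

lemma exists_le (hb : IsWaterfillBundle n dv Av r s t) (hb' : IsWaterfillBundle n dv' Av' r s t)
    (ht : 0 ≤ t) : Av' s ≤ Av s ∨ Av' r ≤ Av r := by
  rcases le_total (dv' s) (dv s) with h | h
  · left
    rw [hb.share_other, hb'.share_other]
    gcongr
  · right
    rw [hb.share_dom_eq, hb'.share_dom_eq]
    exact max_le_max le_rfl (div_le_div_of_nonneg_left ht hb.demand_pos h)

lemma share_le_of_level_le (hb : IsWaterfillBundle n dv Av s r t) (ht : t ≤ 1 / n) :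
    Av r ≤ 1 / n := by
  rw [hb.share_other]
  exact max_le (by gcongr; exact hb.demand_le_one) ht

end IsWaterfillBundle

section Waterfill

open IsWaterfillBundle

variable {n : ℕ} {d A : Fin n → Fin 2 → ℝ} {r s : Fin 2} {t t' : ℝ}

lemma waterfill_level_le (hsum : ∑ i, A i s ≤ 1)
    (hA : ∀ i, IsWaterfillBundle n (d i) (A i) r s t ∨ IsWaterfillBundle n (d i) (A i) s r t')
    {j : Fin n} (hj : IsWaterfillBundle n (d j) (A j) r s t) : t ≤ 1 / n := by
  by_contra! ht
  have hshare : ∀ i, 1 / n ≤ A i s := fun i =>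
    (hA i).elim (fun hb => ht.le.trans hb.level_le) one_div_le
  linarith [le_one_div_of_sum_le_one hshare hsum j, hj.level_le]

lemma waterfill_exists_le (hsum : ∀ k, ∑ i, A i k ≤ 1) (ht : 0 ≤ t) (ht' : 0 ≤ t')
    (hA : ∀ i, IsWaterfillBundle n (d i) (A i) r s t ∨ IsWaterfillBundle n (d i) (A i) s r t')
    (i j : Fin n) : ∃ k, A j k ≤ A i k := by
  rcases hA i with hi | hi <;> rcases hA j with hj | hj
  · exact (hi.exists_le hj ht).elim (⟨s, ·⟩) (⟨r, ·⟩)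
  · exact ⟨r, (hj.share_le_of_level_le
      (waterfill_level_le (hsum r) (fun k => (hA k).symm) hj)).trans hi.one_div_le⟩
  · exact ⟨s, (hj.share_le_of_level_le (waterfill_level_le (hsum s) hA hj)).trans hi.one_div_le⟩
  · exact (hi.exists_le hj ht').elim (⟨r, ·⟩) (⟨s, ·⟩)

lemma Waterfill.isWaterfillBundle (hd : ValidInstance d) (hW : Waterfill d A t t') (i : Fin n) :
    IsWaterfillBundle n (d i) (A i) 0 1 t ∨ IsWaterfillBundle n (d i) (A i) 1 0 t' := by
  rcases hd.eq_one_or i with h0 | ⟨h0, h1⟩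
  · obtain ⟨hA1, hA0⟩ := (hW i).1 h0
    exact Or.inl ⟨h0, (hd.1 i 1).1, (hd.1 i 1).2, hA1, hA0⟩
  · obtain ⟨hA0, hA1⟩ := (hW i).2 h0
    exact Or.inr ⟨h1, (hd.1 i 0).1, (hd.1 i 0).2, hA0, hA1⟩

end Waterfill

/-- With two resources, mechanism F2 satisfies SI, EF and PO. -/
theorem f2_properties :
    ∀ (n : ℕ), 0 < n → ∀ d : Fin n → Fin 2 → ℝ, ValidInstance d →
      ∀ A : Fin n → Fin 2 → ℝ, IsF2Alloc d A →
        SI d A ∧ EF d A ∧ PO d A := by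
  intro n _ d hd A hF2
  obtain ⟨t₁, t₂, ht₁, ht₂, hW, -, ⟨-, hsum⟩, r, hr⟩ := hF2
  have hpos : ∀ i r, 0 < d i r := fun i r => (hd.1 i r).1
  have hbundle := hW.isWaterfillBundle hd
  have hshare : ∀ i, ∃ w, 1 / (n : ℝ) ≤ w ∧ A i = w • d i := fun i => by
    rcases hbundle i with hb | hb <;> exact ⟨_, hb.one_div_le, hb.eq_smul (by decide)⟩
  choose w hw hAw using hshare
  have hw0 : ∀ i, 0 ≤ w i := fun i => (by positivity : (0 : ℝ) ≤ 1 / n).trans (hw i)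
  refine ⟨fun i => ?_, ef_of_forall_exists_le hpos hw0 hAw
    (waterfill_exists_le hsum ht₁ ht₂ hbundle), po_of_sum_eq_one hpos hw0 hAw hr⟩
  rw [hAw i, util_smul_self (hpos i 0) (hw0 i)]
  exact hw i
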